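/- arXiv:2210.07082 — 5 statements merged into one kernel-verified Lean document; each statement's English description precedes it below -/
import Mathlib

section
/- Let x_1, …, x_n ∈ ℝ^d with min_i ‖x_i‖² ≥ 3·n·max_{i≠j} |⟨x_i,x_j⟩|, labels y_i ∈ {±1}, and R = max_i‖x_i‖/min_i‖x_i‖. Then the unit vector μ̂/‖μ̂‖ with μ̂ = ∑_i y_i x_i satisfies ⟨μ̂/‖μ̂‖, y_k x_k⟩ ≥ √2·min_i‖x_i‖/(3·R·√n) for every k. -/
/-!
Against `y k • x k`, the sum `μ = ∑ i, y i • x i` contributes `‖x k‖²` from the diagonal term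
and at most `n - 1` cross terms, each of size at most `min ‖x i‖² / (3n)`; hence
`⟪μ, y k • x k⟫ ≥ 2/3 · min ‖x i‖²`. Summing the same estimate over `k` bounds
`‖μ‖² = ∑ k, ⟪μ, y k • x k⟫` by `2n · max ‖x i‖²`, and dividing the two bounds gives the margin.
-/

open Real Finset
open scoped RealInnerProductSpace

section NearOrthogonal

variable {ι E : Type*} [Fintype ι] [NormedAddCommGroup E] [InnerProductSpace ℝ E]
  {v : ι → E} {y : ι → ℝ}

theorem abs_inner_sum_smul_sub_norm_sq_le {ε : ℝ} (hy : ∀ i, |y i| = 1)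
    (hε : ∀ i j, i ≠ j → |⟪v i, v j⟫| ≤ ε) (k : ι) :
    |⟪∑ i, y i • v i, y k • v k⟫ - ‖v k‖ ^ 2| ≤ (Fintype.card ι - 1) * ε := by
  classical
  have hdiag : ⟪y k • v k, y k • v k⟫ = ‖v k‖ ^ 2 := by
    rw [real_inner_self_eq_norm_sq, norm_smul, Real.norm_eq_abs, hy, one_mul]
  rw [sum_inner, ← add_sum_erase _ _ (mem_univ k), hdiag, add_sub_cancel_left]
  calc |∑ i ∈ univ.erase k, ⟪y i • v i, y k • v k⟫|
      ≤ ∑ i ∈ univ.erase k, |⟪y i • v i, y k • v k⟫| := abs_sum_le_sum_abs _ _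
    _ ≤ ∑ _i ∈ univ.erase k, ε := sum_le_sum fun i hi => by
        rw [real_inner_smul_left, real_inner_smul_right, abs_mul, abs_mul, hy, hy, one_mul,
          one_mul]
        exact hε i k (ne_of_mem_erase hi)
    _ = (Fintype.card ι - 1) * ε := by
        rw [sum_const, card_erase_of_mem (mem_univ k), card_univ, nsmul_eq_mul,
          Nat.cast_pred (Fintype.card_pos_iff.mpr ⟨k⟩)]

theorem norm_sum_smul_sq_le {ε : ℝ} (hy : ∀ i, |y i| = 1)
    (hε : ∀ i j, i ≠ j → |⟪v i, v j⟫| ≤ ε) :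
    ‖∑ i, y i • v i‖ ^ 2 ≤ ∑ k, ‖v k‖ ^ 2 + Fintype.card ι * (Fintype.card ι - 1) * ε := by
  rw [← real_inner_self_eq_norm_sq, inner_sum]
  calc ∑ k, ⟪∑ i, y i • v i, y k • v k⟫ ≤ ∑ k, (‖v k‖ ^ 2 + (Fintype.card ι - 1) * ε) :=
        sum_le_sum fun k _ => by
          linarith [le_of_abs_le (abs_inner_sum_smul_sub_norm_sq_le hy hε k)]
    _ = _ := by rw [sum_add_distrib, sum_const, card_univ, nsmul_eq_mul, mul_assoc]

theorem inner_normalized_sum_smul_ge {a b : ℝ} (ha : 0 < a) (hy : ∀ i, |y i| = 1)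
    (hva : ∀ i, a ≤ ‖v i‖) (hvb : ∀ i, ‖v i‖ ≤ b)
    (horth : ∀ i j, i ≠ j → 3 * Fintype.card ι * |⟪v i, v j⟫| ≤ a ^ 2) (k : ι) :
    √2 * a ^ 2 / (3 * b * √(Fintype.card ι)) ≤
      ⟪‖∑ i, y i • v i‖⁻¹ • ∑ i, y i • v i, y k • v k⟫ := by
  set N : ℝ := (Fintype.card ι : ℝ)
  set μ := ∑ i, y i • v i
  have hN : 1 ≤ N := Nat.one_le_cast.mpr (Fintype.card_pos_iff.mpr ⟨k⟩)
  have hb : 0 < b := ha.trans_le ((hva k).trans (hvb k))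
  have hε : ∀ i j, i ≠ j → |⟪v i, v j⟫| ≤ a ^ 2 / (3 * N) := fun i j hij => by
    rw [le_div_iff₀ (by positivity), mul_comm]; exact horth i j hij
  have hcross : (N - 1) * (a ^ 2 / (3 * N)) ≤ a ^ 2 / 3 := by
    rw [mul_div_assoc', div_le_div_iff₀ (by positivity) (by positivity)]; nlinarith
  have hnum : 2 / 3 * a ^ 2 ≤ ⟪μ, y k • v k⟫ := by
    have := (abs_le.mp (abs_inner_sum_smul_sub_norm_sq_le hy hε k)).1
    nlinarith [hva k]
  have hnorm : ‖μ‖ ≤ √2 * √N * b := by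
    have hsq : ‖μ‖ ^ 2 ≤ (√2 * √N * b) ^ 2 := by
      have hsum : ∑ i, ‖v i‖ ^ 2 ≤ N * b ^ 2 := by
        simpa using sum_le_sum fun i (_ : i ∈ univ) =>
          pow_le_pow_left₀ (norm_nonneg _) (hvb i) 2
      rw [mul_pow, mul_pow, sq_sqrt (by norm_num), sq_sqrt (by positivity)]
      have hab : a ^ 2 ≤ b ^ 2 := pow_le_pow_left₀ ha.le ((hva k).trans (hvb k)) 2
      nlinarith [norm_sum_smul_sq_le hy hε,
        mul_le_mul_of_nonneg_left hcross (by positivity : 0 ≤ N)]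
    exact (pow_le_pow_iff_left₀ (norm_nonneg _) (by positivity) two_ne_zero).mp hsq
  have hμ : 0 < ‖μ‖ := norm_pos_iff.mpr fun h => by
    simp only [h, inner_zero_left] at hnum; nlinarith
  rw [real_inner_smul_left, inv_mul_eq_div]
  calc √2 * a ^ 2 / (3 * b * √N) = 2 / 3 * a ^ 2 / (√2 * √N * b) := by
        field_simp; rw [sq_sqrt (by norm_num)]
    _ ≤ ⟪μ, y k • v k⟫ / ‖μ‖ := div_le_div₀ (hnum.trans' (by positivity)) hnum hμ hnorm

end NearOrthogonal

theorem normalized_sum_yx_margin_general {d n : ℕ}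
    (x : Fin n → EuclideanSpace ℝ (Fin d)) (y : Fin n → ℝ)
    (hx : ∀ i, x i ≠ 0)
    (hy : ∀ i, y i = 1 ∨ y i = -1)
    (hne : (Finset.univ : Finset (Fin n)).Nonempty)
    (horth : ∀ i j : Fin n, i ≠ j →
      3 * (n : ℝ) * |⟪x i, x j⟫| ≤ Finset.univ.inf' hne (fun k => ‖x k‖ ^ 2))
    (Rmin Rmax R : ℝ)
    (hRmin : Rmin = Finset.univ.inf' hne (fun k => ‖x k‖))
    (hRmax : Rmax = Finset.univ.sup' hne (fun k => ‖x k‖))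
    (hR : R = Rmax / Rmin)
    (μ : EuclideanSpace ℝ (Fin d)) (hμ : μ = ∑ i, y i • x i) :
    ∀ k : Fin n,
      ⟪‖μ‖⁻¹ • μ, y k • x k⟫ ≥ Real.sqrt 2 * Rmin / (3 * R * Real.sqrt n) := by
  intro k
  obtain ⟨i₀, -, hi₀⟩ := exists_mem_eq_inf' hne fun k => ‖x k‖
  rw [← hRmin] at hi₀
  have hRmin_pos : 0 < Rmin := hi₀ ▸ norm_pos_iff.mpr (hx i₀)
  have hsign : ∀ i, |y i| = 1 := fun i => by rcases hy i with h | h <;> simp [h]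
  have horth_min : ∀ i j, i ≠ j → 3 * Fintype.card (Fin n) * |⟪x i, x j⟫| ≤ Rmin ^ 2 :=
    fun i j hij => by
      rw [Fintype.card_fin, hi₀]; exact (horth i j hij).trans (inf'_le _ (mem_univ i₀))
  have key := inner_normalized_sum_smul_ge hRmin_pos hsign
    (fun i => hRmin ▸ inf'_le _ (mem_univ i))
    (fun i => hRmax ▸ le_sup' (fun k => ‖x k‖) (mem_univ i)) horth_min k
  rw [Fintype.card_fin, ← hμ] at key
  rw [ge_iff_le, hR]
  convert key using 1
  field_simp

theorem normalized_sum_yx_margin {d n : ℕ} (hn : 0 < n)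
    (x : Fin n → EuclideanSpace ℝ (Fin d)) (y : Fin n → ℝ)
    (hx : ∀ i, x i ≠ 0)
    (hy : ∀ i, y i = 1 ∨ y i = -1)
    (hne : (Finset.univ : Finset (Fin n)).Nonempty)
    (horth : ∀ i j : Fin n, i ≠ j →
      3 * (n : ℝ) * |⟪x i, x j⟫| ≤ Finset.univ.inf' hne (fun k => ‖x k‖ ^ 2))
    (Rmin Rmax R : ℝ)
    (hRmin : Rmin = Finset.univ.inf' hne (fun k => ‖x k‖))
    (hRmax : Rmax = Finset.univ.sup' hne (fun k => ‖x k‖))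
    (hR : R = Rmax / Rmin)
    (μ : EuclideanSpace ℝ (Fin d)) (hμ : μ = ∑ i, y i • x i) :
    ∀ k : Fin n,
      ⟪‖μ‖⁻¹ • μ, y k • x k⟫ ≥ Real.sqrt 2 * Rmin / (3 * R * Real.sqrt n) :=
  normalized_sum_yx_margin_general x y hx hy hne horth Rmin Rmax R hRmin hRmax hR μ hμ
end

section
/- Let φ : ℝ → ℝ be twice differentiable with |φ''(z)| ≤ H for all z. Let f(x; W) = ∑_{j=1}^m a_j φ(⟨w_j, x⟩) where a_j² = 1/m for each j. Then for any matrices W, V ∈ ℝ^{m×d} and any x ∈ ℝ^d, |f(x;W) − f(x;V) − ⟨∇_W f(x;V), W−V⟩| ≤ (H‖x‖²)/(2√m) · ‖W−V‖_F², where ∇_W f(x;V) has rows a_j φ'(⟨v_j,x⟩) x^T. -/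
/-!
Neuron by neuron, the error is `a j` times the first-order Taylor remainder of `φ` between
`⟪V j, x⟫` and `⟪W j, x⟫`. Since `φ'` is `H`-Lipschitz, the integral form of that remainder is at
most `H / 2 * ⟪W j - V j, x⟫ ^ 2 ≤ H / 2 * ‖W j - V j‖ ^ 2 * ‖x‖ ^ 2` (Cauchy–Schwarz), and
`|a j| = 1 / √m`.
-/

open Real Finset MeasureTheory
open scoped RealInnerProductSpace NNReal Interval

theorem norm_sub_sub_smul_le_of_lipschitzWith_deriv {E : Type*} [NormedAddCommGroup E]
    [NormedSpace ℝ E] [CompleteSpace E] {f f' : ℝ → E} {K : ℝ≥0}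
    (hf : ∀ t, HasDerivAt f (f' t) t) (hf' : LipschitzWith K f') (a b : ℝ) :
    ‖f b - f a - (b - a) • f' a‖ ≤ K / 2 * (b - a) ^ 2 := by
  have hint : IntervalIntegrable f' volume a b := hf'.continuous.intervalIntegrable a b
  have hftc : ∫ t in a..b, (f' t - f' a) = f b - f a - (b - a) • f' a := by
    rw [intervalIntegral.integral_sub hint intervalIntegrable_const,
      intervalIntegral.integral_const,
      intervalIntegral.integral_eq_sub_of_hasDerivAt (fun t _ => hf t) hint]
  -- the exponent `1` matches `integral_pow_abs_sub_uIoc`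
  have hbound : IntegrableOn (fun t => (K : ℝ) * |t - a| ^ 1) (Ι a b) :=
    intervalIntegrable_iff.mp <|
      (by fun_prop : Continuous fun t => (K : ℝ) * |t - a| ^ 1).intervalIntegrable a b
  calc ‖f b - f a - (b - a) • f' a‖ = ‖∫ t in a..b, (f' t - f' a)‖ := by rw [hftc]
    _ ≤ ∫ t in Ι a b, ‖f' t - f' a‖ := intervalIntegral.norm_integral_le_integral_norm_uIoc
    _ ≤ ∫ t in Ι a b, (K : ℝ) * |t - a| ^ 1 := by
      refine integral_mono_of_nonneg (.of_forall fun t => norm_nonneg _) hbound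
        (.of_forall fun t => ?_)
      simpa only [← dist_eq_norm, ← Real.dist_eq, pow_one] using hf'.dist_le_mul t a
    _ = K / 2 * (b - a) ^ 2 := by
      rw [integral_const_mul, integral_pow_abs_sub_uIoc, sq_abs]; ring

theorem lipschitzWith_of_abs_deriv_le {f f' : ℝ → ℝ} {H : ℝ}
    (hf : ∀ t, HasDerivAt f (f' t) t) (hH : ∀ t, |f' t| ≤ H) : LipschitzWith H.toNNReal f :=
  lipschitzWith_of_nnnorm_deriv_le (fun t => (hf t).differentiableAt) fun t => by
    rw [(hf t).deriv, ← NNReal.coe_le_coe, coe_nnnorm, Real.coe_toNNReal']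
    exact le_max_of_le_left (hH t)

theorem abs_comp_inner_sub_sub_mul_le {F : Type*} [NormedAddCommGroup F] [InnerProductSpace ℝ F]
    {φ φ' : ℝ → ℝ} {K : ℝ≥0} (hφ : ∀ z, HasDerivAt φ (φ' z) z) (hφ' : LipschitzWith K φ')
    (w v x : F) :
    |φ ⟪w, x⟫ - φ ⟪v, x⟫ - φ' ⟪v, x⟫ * ⟪w - v, x⟫| ≤ K / 2 * (‖w - v‖ ^ 2 * ‖x‖ ^ 2) := by
  have h := norm_sub_sub_smul_le_of_lipschitzWith_deriv hφ hφ' ⟪v, x⟫ ⟪w, x⟫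
  rw [← inner_sub_left, smul_eq_mul, mul_comm] at h
  refine h.trans (mul_le_mul_of_nonneg_left ?_ (by positivity))
  rw [← mul_pow, ← sq_abs]
  exact pow_le_pow_left₀ (abs_nonneg _) (abs_real_inner_le_norm _ _) 2

theorem network_output_smooth_general {d m : ℕ}
    (φ φ' φ'' : ℝ → ℝ)
    (hφ' : ∀ z, HasDerivAt φ (φ' z) z)
    (hφ'' : ∀ z, HasDerivAt φ' (φ'' z) z)
    (H : ℝ) (hH : ∀ z, |φ'' z| ≤ H)
    (a : Fin m → ℝ) (ha : ∀ j, (a j) ^ 2 = 1 / (m : ℝ))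
    (W V : Fin m → EuclideanSpace ℝ (Fin d)) (x : EuclideanSpace ℝ (Fin d)) :
    |(∑ j, a j * φ ⟪W j, x⟫) - (∑ j, a j * φ ⟪V j, x⟫)
        - (∑ j, a j * φ' ⟪V j, x⟫ * ⟪W j - V j, x⟫)|
      ≤ H * ‖x‖ ^ 2 / (2 * Real.sqrt m) * (∑ j, ‖W j - V j‖ ^ 2) := by
  have hH0 : 0 ≤ H := (abs_nonneg _).trans (hH 0)
  have hneuron := abs_comp_inner_sub_sub_mul_le (F := EuclideanSpace ℝ (Fin d)) hφ'
    (lipschitzWith_of_abs_deriv_le hφ'' hH)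
  simp only [Real.coe_toNNReal _ hH0] at hneuron
  have habs : ∀ j, |a j| = 1 / √m := fun j => by
    rw [← sqrt_sq_eq_abs, ha j, sqrt_div' _ (Nat.cast_nonneg m), sqrt_one]
  calc |(∑ j, a j * φ ⟪W j, x⟫) - (∑ j, a j * φ ⟪V j, x⟫)
        - (∑ j, a j * φ' ⟪V j, x⟫ * ⟪W j - V j, x⟫)|
      = |∑ j, a j * (φ ⟪W j, x⟫ - φ ⟪V j, x⟫ - φ' ⟪V j, x⟫ * ⟪W j - V j, x⟫)| := by
        simp only [← sum_sub_distrib, mul_sub, mul_assoc]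
    _ ≤ ∑ j, |a j| * |φ ⟪W j, x⟫ - φ ⟪V j, x⟫ - φ' ⟪V j, x⟫ * ⟪W j - V j, x⟫| :=
        (abs_sum_le_sum_abs _ _).trans_eq (sum_congr rfl fun j _ => abs_mul _ _)
    _ ≤ ∑ j, 1 / √m * (H / 2 * (‖W j - V j‖ ^ 2 * ‖x‖ ^ 2)) := by
        gcongr with j
        · exact (habs j).le
        · exact hneuron _ _ _
    _ = H * ‖x‖ ^ 2 / (2 * √m) * ∑ j, ‖W j - V j‖ ^ 2 := by
        rw [mul_sum]
        exact sum_congr rfl fun j _ => by ring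

/-- Smoothness of the two-layer network output in its first-layer weights
(rows `W j`, `V j`), for an activation with second derivative bounded by `H`. -/
theorem network_output_smooth {d m : ℕ} (hm : 0 < m)
    (φ φ' φ'' : ℝ → ℝ)
    (hφ' : ∀ z, HasDerivAt φ (φ' z) z)
    (hφ'' : ∀ z, HasDerivAt φ' (φ'' z) z)
    (H : ℝ) (hH : ∀ z, |φ'' z| ≤ H)
    (a : Fin m → ℝ) (ha : ∀ j, (a j) ^ 2 = 1 / (m : ℝ))
    (W V : Fin m → EuclideanSpace ℝ (Fin d)) (x : EuclideanSpace ℝ (Fin d)) :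
    |(∑ j, a j * φ ⟪W j, x⟫) - (∑ j, a j * φ ⟪V j, x⟫)
        - (∑ j, a j * φ' ⟪V j, x⟫ * ⟪W j - V j, x⟫)|
      ≤ H * ‖x‖ ^ 2 / (2 * Real.sqrt m) * (∑ j, ‖W j - V j‖ ^ 2) :=
  network_output_smooth_general φ φ' φ'' hφ' hφ'' H hH a ha W V x
end

section
/- Suppose φ : ℝ → ℝ is differentiable with γ ≤ φ'(z) ≤ 1 for all z, where γ ∈ (0,1]. Suppose x_1,…,x_n ∈ ℝ^d satisfy ‖x_i‖² ≥ C·n·max_{k≠i}|⟨x_i,x_k⟩| for all i, for some C > γ^{-2}. Define for W ∈ ℝ^{m×d} the gradient G_i(W) ∈ ℝ^{m×d} with rows a_j φ'(⟨w_j,x_i⟩) x_i^T, where a_j² = 1/m. Then: (1) ‖G_i(W)‖_F² ≥ γ²‖x_i‖² for all i (gradient persistence), and (2) ‖G_i(W)‖_F² ≥ Cγ²·n·max_{k≠i}|⟨G_i(W), G_k(W)⟩| (near-orthogonality of gradients), where ⟨·,·⟩ is the Frobenius inner product. -/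
open Real Finset
open scoped RealInnerProductSpace

/-- Gradient persistence and near-orthogonality of gradients for leaky activations.
`G i j = a j * φ'(⟪W j, x i⟫) • x i` is the `j`-th row of `∇_W f(x_i; W)`. -/
theorem gradient_persistence_and_near_orthogonality {d m n : ℕ} (hm : 0 < m)
    (γ : ℝ) (hγ0 : 0 < γ) (hγ1 : γ ≤ 1)
    (φ φ' : ℝ → ℝ) (hφ : ∀ z, HasDerivAt φ (φ' z) z)
    (hφ'lb : ∀ z, γ ≤ φ' z) (hφ'ub : ∀ z, φ' z ≤ 1)
    (C : ℝ) (hC : C > γ⁻¹ ^ 2)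
    (x : Fin n → EuclideanSpace ℝ (Fin d))
    (hx : ∀ i k : Fin n, k ≠ i → ‖x i‖ ^ 2 ≥ C * (n : ℝ) * |⟪x i, x k⟫|)
    (a : Fin m → ℝ) (ha : ∀ j, (a j) ^ 2 = 1 / (m : ℝ))
    (W : Fin m → EuclideanSpace ℝ (Fin d))
    (G : Fin n → Fin m → EuclideanSpace ℝ (Fin d))
    (hG : ∀ i j, G i j = (a j * φ' ⟪W j, x i⟫) • x i) :
    (∀ i, (∑ j, ‖G i j‖ ^ 2) ≥ γ ^ 2 * ‖x i‖ ^ 2) ∧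
    (∀ i k : Fin n, k ≠ i →
      (∑ j, ‖G i j‖ ^ 2) ≥ C * γ ^ 2 * (n : ℝ) * |∑ j, ⟪G i j, G k j⟫|) := by
  have hm' : (0:ℝ) < m := by exact_mod_cast hm
  have hφ'pos : ∀ z, 0 < φ' z := fun z => lt_of_lt_of_le hγ0 (hφ'lb z)
  -- norm of each row
  have hnorm : ∀ i j, ‖G i j‖ ^ 2 = (1 / (m:ℝ)) * (φ' ⟪W j, x i⟫)^2 * ‖x i‖ ^ 2 := by
    intro i j
    rw [hG i j, norm_smul, Real.norm_eq_abs, mul_pow, sq_abs, mul_pow, ha j]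
  -- persistence
  have persist : ∀ i, (∑ j, ‖G i j‖ ^ 2) ≥ γ ^ 2 * ‖x i‖ ^ 2 := by
    intro i
    have : ∀ j : Fin m, (1 / (m:ℝ)) * γ^2 * ‖x i‖ ^ 2 ≤ ‖G i j‖ ^ 2 := by
      intro j
      rw [hnorm i j]
      have h1 : γ^2 ≤ (φ' ⟪W j, x i⟫)^2 :=
        pow_le_pow_left₀ hγ0.le (hφ'lb _) 2
      have := mul_le_mul_of_nonneg_left h1 (by positivity : (0:ℝ) ≤ 1 / (m:ℝ))
      exact mul_le_mul_of_nonneg_right this (by positivity)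
    calc γ ^ 2 * ‖x i‖ ^ 2 = ∑ _j : Fin m, (1 / (m:ℝ)) * γ^2 * ‖x i‖ ^ 2 := by
          rw [Finset.sum_const, Finset.card_univ, Fintype.card_fin, nsmul_eq_mul]
          field_simp
      _ ≤ ∑ j, ‖G i j‖ ^ 2 := Finset.sum_le_sum (fun j _ => this j)
  refine ⟨persist, fun i k hk => ?_⟩
  -- inner product bound
  have hip : |∑ j, ⟪G i j, G k j⟫| ≤ |⟪x i, x k⟫| := by
    have heq : ∀ j, ⟪G i j, G k j⟫ =
        (1 / (m:ℝ)) * (φ' ⟪W j, x i⟫ * φ' ⟪W j, x k⟫) * ⟪x i, x k⟫ := by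
      intro j
      rw [hG i j, hG k j, real_inner_smul_left, real_inner_smul_right]
      rw [← ha j]; ring
    calc |∑ j, ⟪G i j, G k j⟫| ≤ ∑ j, |⟪G i j, G k j⟫| := Finset.abs_sum_le_sum_abs _ _
      _ ≤ ∑ _j : Fin m, (1 / (m:ℝ)) * |⟪x i, x k⟫| := by
          apply Finset.sum_le_sum
          intro j _
          rw [heq j, abs_mul, abs_mul]
          have h01 : 0 < φ' ⟪W j, x i⟫ * φ' ⟪W j, x k⟫ :=
            mul_pos (hφ'pos _) (hφ'pos _)
          have h1 : |φ' ⟪W j, x i⟫ * φ' ⟪W j, x k⟫| ≤ 1 := by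
            rw [abs_of_pos h01]
            exact mul_le_one₀ (hφ'ub _) (hφ'pos _).le (hφ'ub _)
          have h2 : |(1 / (m:ℝ))| = 1 / (m:ℝ) := abs_of_pos (by positivity)
          rw [h2]
          calc 1 / (m:ℝ) * |φ' ⟪W j, x i⟫ * φ' ⟪W j, x k⟫| * |⟪x i, x k⟫|
              ≤ 1 / (m:ℝ) * 1 * |⟪x i, x k⟫| := by
                apply mul_le_mul_of_nonneg_right _ (abs_nonneg _)
                exact mul_le_mul_of_nonneg_left h1 (by positivity)
            _ = 1 / (m:ℝ) * |⟪x i, x k⟫| := by ring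
      _ = |⟪x i, x k⟫| := by
          rw [Finset.sum_const, Finset.card_univ, Fintype.card_fin, nsmul_eq_mul]
          field_simp
  have hC0 : (0:ℝ) < C := lt_trans (by positivity) hC
  have hxik := hx i k hk
  calc C * γ ^ 2 * (n : ℝ) * |∑ j, ⟪G i j, G k j⟫|
      ≤ C * γ ^ 2 * (n : ℝ) * |⟪x i, x k⟫| := by
        apply mul_le_mul_of_nonneg_left hip (by positivity)
    _ = γ ^ 2 * (C * (n : ℝ) * |⟪x i, x k⟫|) := by ring
    _ ≤ γ ^ 2 * ‖x i‖ ^ 2 := by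
        apply mul_le_mul_of_nonneg_left hxik (by positivity)
    _ ≤ ∑ j, ‖G i j‖ ^ 2 := persist i
end

section
/- Let φ be differentiable with γ ≤ φ'(z) ≤ 1 for all z, γ ∈ (0,1]. Let x_1,…,x_n ∈ ℝ^d with min_i‖x_i‖² ≥ 3·n·max_{i≠j}|⟨x_i,x_j⟩|, y_i ∈ {±1}, R = max_i‖x_i‖/min_i‖x_i‖. Let f(x;W) = ∑_{j=1}^m a_j φ(⟨w_j,x⟩) with a_j ∈ {±1/√m}, and let L̂(W) = (1/n)∑_i ℓ(y_i f(x_i;W)) for a differentiable decreasing loss ℓ. Then ‖∇_W L̂(W)‖_F ≥ (√2·γ·min_i‖x_i‖)/(3R√n) · Ĝ(W), where Ĝ(W) = (1/n)∑_i (−ℓ'(y_i f(x_i;W))) and −ℓ' > 0. -/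
/-! Pair the gradient with the direction `Z j = -a j • μ / ‖μ‖`, where `μ = ∑ i, y i • x i`;
it has unit Frobenius norm because `∑ j, a j ^ 2 = 1`. Near-orthogonality of the data makes every
margin `y k * ⟪x k, μ⟫` at least `2/3 Rmin ^ 2` while `‖μ‖ ^ 2 ≤ 4/3 n Rmax ^ 2`, so the normalised
margin is at least `√2 Rmin / (3 R √n)`. With `φ' ≥ γ` and `ℓ' < 0` this bounds `⟪grad, Z⟫` below
by `γ` times the normalised margin times `G`, and Cauchy–Schwarz gives `‖grad‖ ≥ ⟪grad, Z⟫`. -/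

open Real Finset
open scoped RealInnerProductSpace

theorem le_sum_sq_mul {κ : Type*} [Fintype κ] {a p : κ → ℝ} {γ : ℝ} (ha : ∑ j, a j ^ 2 = 1)
    (hp : ∀ j, γ ≤ p j) : γ ≤ ∑ j, a j ^ 2 * p j := calc
  γ = ∑ j, a j ^ 2 * γ := by rw [← sum_mul, ha, one_mul]
  _ ≤ ∑ j, a j ^ 2 * p j := sum_le_sum fun j _ => mul_le_mul_of_nonneg_left (hp j) (sq_nonneg _)

theorem sum_sq_eq_one_of_eq_inv_sqrt {m : ℕ} (hm : 0 < m) {a : Fin m → ℝ}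
    (ha : ∀ j, a j = 1 / √m ∨ a j = -(1 / √m)) : ∑ j, a j ^ 2 = 1 := by
  have hsq : ∀ j, a j ^ 2 = (m : ℝ)⁻¹ := fun j => by
    rcases ha j with h | h <;> simp [h, Real.sq_sqrt (Nat.cast_nonneg m)]
  simp only [hsq, sum_const, card_univ, Fintype.card_fin, nsmul_eq_mul]
  exact mul_inv_cancel₀ (by positivity)

theorem mul_sum_neg_le_neg_sum_mul {ι : Type*} [Fintype ι] {c s T : ι → ℝ} {γ τ : ℝ}
    (hc : ∀ i, c i ≤ 0) (hγ : 0 ≤ γ) (hs : ∀ i, γ ≤ s i) (hτ : 0 ≤ τ) (hT : ∀ i, τ ≤ T i) :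
    γ * τ * ∑ i, -c i ≤ -∑ i, c i * s i * T i := by
  rw [mul_sum, ← sum_neg_distrib]
  gcongr with i
  have := mul_le_mul (hs i) (hT i) hτ (hγ.trans (hs i))
  nlinarith [hc i]

section InnerProductSpace

variable {E : Type*} [NormedAddCommGroup E] [InnerProductSpace ℝ E] {ι κ : Type*} [Fintype ι]
  [Fintype κ]

theorem norm_sum_smul_le_sqrt_mul_sqrt (a : κ → ℝ) (g : κ → E) :
    ‖∑ j, a j • g j‖ ≤ √(∑ j, a j ^ 2) * √(∑ j, ‖g j‖ ^ 2) := calc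
  ‖∑ j, a j • g j‖ ≤ ∑ j, |a j| * ‖g j‖ := (norm_sum_le _ _).trans_eq (by simp only [norm_smul,
    Real.norm_eq_abs])
  _ ≤ √(∑ j, |a j| ^ 2) * √(∑ j, ‖g j‖ ^ 2) := Real.sum_mul_le_sqrt_mul_sqrt _ _ _
  _ = √(∑ j, a j ^ 2) * √(∑ j, ‖g j‖ ^ 2) := by simp only [sq_abs]

theorem norm_sum_smul_sq_eq_sum_mul_inner (y : ι → ℝ) (x : ι → E) :
    ‖∑ i, y i • x i‖ ^ 2 = ∑ k, y k * ⟪x k, ∑ i, y i • x i⟫ := by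
  rw [← real_inner_self_eq_norm_sq, sum_inner]
  simp only [real_inner_smul_left]

theorem abs_mul_inner_sum_smul_sub_norm_sq_le [DecidableEq ι] {y : ι → ℝ} (hy : ∀ i, |y i| = 1)
    (x : ι → E) (k : ι) :
    |y k * ⟪x k, ∑ i, y i • x i⟫ - ‖x k‖ ^ 2| ≤ ∑ i ∈ univ.erase k, |⟪x k, x i⟫| := by
  have hyk : y k * y k = 1 := by rw [← abs_mul_abs_self, hy, one_mul]
  have hsplit : y k * ⟪x k, ∑ i, y i • x i⟫ - ‖x k‖ ^ 2
      = ∑ i ∈ univ.erase k, y k * y i * ⟪x k, x i⟫ := by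
    simp only [inner_sum, real_inner_smul_right, mul_sum, ← mul_assoc]
    rw [← add_sum_erase _ _ (mem_univ k), hyk, one_mul, real_inner_self_eq_norm_sq,
      add_sub_cancel_left]
  rw [hsplit]
  refine (abs_sum_le_sum_abs _ _).trans_eq (sum_congr rfl fun i _ => ?_)
  rw [abs_mul, abs_mul, hy, hy, one_mul, one_mul]

theorem inner_sum_smul_eq_of_eq_smul_sum (t : ℝ) (c y : ι → ℝ) (a : κ → ℝ) (p : κ → ι → ℝ)
    (x : ι → E) {g : κ → E} (hg : ∀ j, g j = t • ∑ i, (c i * y i * (a j * p j i)) • x i) (v : E) :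
    ⟪∑ j, a j • g j, v⟫ = t * ∑ i, c i * (∑ j, a j ^ 2 * p j i) * (y i * ⟪x i, v⟫) := by
  simp only [sum_inner, real_inner_smul_left, hg, mul_sum, sum_mul]
  rw [sum_comm]
  exact sum_congr rfl fun i _ => sum_congr rfl fun j _ => by ring

theorem neg_inner_sum_smul_le_sqrt_mul_norm {a : κ → ℝ} (ha : ∑ j, a j ^ 2 = 1) (g : κ → E)
    (v : E) : -⟪∑ j, a j • g j, v⟫ ≤ √(∑ j, ‖g j‖ ^ 2) * ‖v‖ := calc
  -⟪∑ j, a j • g j, v⟫ ≤ ‖∑ j, a j • g j‖ * ‖v‖ := (neg_le_abs _).trans (abs_real_inner_le_norm _ _)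
  _ ≤ √(∑ j, ‖g j‖ ^ 2) * ‖v‖ := by
      gcongr
      simpa [ha] using norm_sum_smul_le_sqrt_mul_sqrt a g

theorem mul_mul_le_neg_inner_sum_smul {t γ τ : ℝ} {c y : ι → ℝ} {a : κ → ℝ}
    {p : κ → ι → ℝ} {x : ι → E} {g : κ → E} {v : E}
    (hg : ∀ j, g j = t • ∑ i, (c i * y i * (a j * p j i)) • x i) (ht : 0 ≤ t)
    (hc : ∀ i, c i ≤ 0) (ha : ∑ j, a j ^ 2 = 1) (hγ : 0 ≤ γ) (hp : ∀ j i, γ ≤ p j i) (hτ : 0 ≤ τ)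
    (hmargin : ∀ i, τ ≤ y i * ⟪x i, v⟫) :
    γ * τ * (t * ∑ i, -c i) ≤ -⟪∑ j, a j • g j, v⟫ := by
  rw [inner_sum_smul_eq_of_eq_smul_sum t c y a p x hg, mul_left_comm, ← mul_neg]
  gcongr
  exact mul_sum_neg_le_neg_sum_mul hc hγ (fun i => le_sum_sq_mul ha (hp · i)) hτ hmargin

end InnerProductSpace

section SeparatedData

variable {E : Type*} [NormedAddCommGroup E] [InnerProductSpace ℝ E] {ι : Type*} [Fintype ι]
  [DecidableEq ι] {x : ι → E} {y : ι → ℝ} {Rmin Rmax : ℝ}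

theorem abs_mul_inner_sum_smul_sub_norm_sq_le_div_three (hy : ∀ i, |y i| = 1)
    (horth : ∀ i j, i ≠ j → 3 * (Fintype.card ι : ℝ) * |⟪x i, x j⟫| ≤ Rmin ^ 2) (k : ι) :
    |y k * ⟪x k, ∑ i, y i • x i⟫ - ‖x k‖ ^ 2| ≤ Rmin ^ 2 / 3 := by
  have hn : (0 : ℝ) < Fintype.card ι := by exact_mod_cast Fintype.card_pos_iff.2 ⟨k⟩
  calc |y k * ⟪x k, ∑ i, y i • x i⟫ - ‖x k‖ ^ 2| ≤ ∑ i ∈ univ.erase k, |⟪x k, x i⟫| :=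
        abs_mul_inner_sum_smul_sub_norm_sq_le hy x k
    _ ≤ ∑ i ∈ univ.erase k, Rmin ^ 2 / (3 * Fintype.card ι) := sum_le_sum fun i hi =>
        (le_div_iff₀' (by positivity)).2 (horth k i (ne_of_mem_erase hi).symm)
    _ ≤ ∑ _i : ι, Rmin ^ 2 / (3 * Fintype.card ι) :=
        sum_le_sum_of_subset_of_nonneg (erase_subset _ _) fun _ _ _ => by positivity
    _ = Rmin ^ 2 / 3 := by
        rw [sum_const, card_univ, nsmul_eq_mul]
        field_simp

theorem two_thirds_mul_sq_le_mul_inner_sum_smul (hy : ∀ i, |y i| = 1)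
    (horth : ∀ i j, i ≠ j → 3 * (Fintype.card ι : ℝ) * |⟪x i, x j⟫| ≤ Rmin ^ 2)
    (hRmin0 : 0 ≤ Rmin) (hxmin : ∀ k, Rmin ≤ ‖x k‖) (k : ι) :
    2 / 3 * Rmin ^ 2 ≤ y k * ⟪x k, ∑ i, y i • x i⟫ := by
  have hk := abs_le.1 (abs_mul_inner_sum_smul_sub_norm_sq_le_div_three hy horth k)
  have := pow_le_pow_left₀ hRmin0 (hxmin k) 2
  linarith

theorem norm_sum_smul_pos (hy : ∀ i, |y i| = 1)
    (horth : ∀ i j, i ≠ j → 3 * (Fintype.card ι : ℝ) * |⟪x i, x j⟫| ≤ Rmin ^ 2)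
    (hRmin : 0 < Rmin) (hxmin : ∀ k, Rmin ≤ ‖x k‖) (k : ι) : 0 < ‖∑ i, y i • x i‖ :=
  norm_pos_iff.2 fun h => by
    have := two_thirds_mul_sq_le_mul_inner_sum_smul hy horth hRmin.le hxmin k
    rw [h, inner_zero_right, mul_zero] at this
    nlinarith

theorem norm_sum_smul_sq_le_s16 (hy : ∀ i, |y i| = 1)
    (horth : ∀ i j, i ≠ j → 3 * (Fintype.card ι : ℝ) * |⟪x i, x j⟫| ≤ Rmin ^ 2)
    (hRmin0 : 0 ≤ Rmin) (hxmin : ∀ k, Rmin ≤ ‖x k‖)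
    (hxmax : ∀ k, ‖x k‖ ≤ Rmax) :
    ‖∑ i, y i • x i‖ ^ 2 ≤ Fintype.card ι * (4 / 3 * Rmax ^ 2) := by
  rw [norm_sum_smul_sq_eq_sum_mul_inner]
  calc ∑ k, y k * ⟪x k, ∑ i, y i • x i⟫ ≤ ∑ _k : ι, 4 / 3 * Rmax ^ 2 := sum_le_sum fun k _ => by
        have hk := abs_le.1 (abs_mul_inner_sum_smul_sub_norm_sq_le_div_three hy horth k)
        have := pow_le_pow_left₀ hRmin0 (hxmin k) 2
        have := pow_le_pow_left₀ (norm_nonneg _) (hxmax k) 2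
        linarith
    _ = Fintype.card ι * (4 / 3 * Rmax ^ 2) := by rw [sum_const, card_univ, nsmul_eq_mul]

theorem margin_mul_norm_sum_smul_le (hy : ∀ i, |y i| = 1)
    (horth : ∀ i j, i ≠ j → 3 * (Fintype.card ι : ℝ) * |⟪x i, x j⟫| ≤ Rmin ^ 2)
    (hRmin0 : 0 ≤ Rmin) (hxmin : ∀ k, Rmin ≤ ‖x k‖)
    (hxmax : ∀ k, ‖x k‖ ≤ Rmax) (k : ι) :
    √2 * Rmin / (3 * (Rmax / Rmin) * √(Fintype.card ι)) * ‖∑ i, y i • x i‖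
      ≤ y k * ⟪x k, ∑ i, y i • x i⟫ := by
  refine le_trans ?_ (two_thirds_mul_sq_le_mul_inner_sum_smul hy horth hRmin0 hxmin k)
  rcases hRmin0.eq_or_lt with h | hpos
  · simp [← h]
  have hRmax : 0 < Rmax := hpos.trans_le ((hxmin k).trans (hxmax k))
  have hn : (0 : ℝ) < Fintype.card ι := by exact_mod_cast Fintype.card_pos_iff.2 ⟨k⟩
  rw [← pow_le_pow_iff_left₀ (by positivity) (by positivity) two_ne_zero]
  calc (√2 * Rmin / (3 * (Rmax / Rmin) * √(Fintype.card ι)) * ‖∑ i, y i • x i‖) ^ 2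
      = (√2 * Rmin / (3 * (Rmax / Rmin) * √(Fintype.card ι))) ^ 2 * ‖∑ i, y i • x i‖ ^ 2 :=
        mul_pow _ _ _
    _ ≤ (√2 * Rmin / (3 * (Rmax / Rmin) * √(Fintype.card ι))) ^ 2
        * (Fintype.card ι * (4 / 3 * Rmax ^ 2)) := by
        gcongr
        exact norm_sum_smul_sq_le_s16 hy horth hRmin0 hxmin hxmax
    _ = 8 / 27 * Rmin ^ 4 := by
        rw [div_pow, mul_pow, mul_pow, mul_pow, Real.sq_sqrt zero_le_two, Real.sq_sqrt hn.le]
        field_simp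
        ring
    _ ≤ (2 / 3 * Rmin ^ 2) ^ 2 := by nlinarith [pow_nonneg hRmin0 4]

end SeparatedData

theorem proxy_PL_inequality_general {d m n : ℕ} (hm : 0 < m)
    (γ : ℝ) (hγ0 : 0 < γ)
    (φ' : ℝ → ℝ)
    (hφ'lb : ∀ z, γ ≤ φ' z)
    (ℓ : ℝ → ℝ) (hℓ' : ∀ z, deriv ℓ z < 0)
    (x : Fin n → EuclideanSpace ℝ (Fin d)) (y : Fin n → ℝ)
    (hy : ∀ i, y i = 1 ∨ y i = -1)
    (hne : (Finset.univ : Finset (Fin n)).Nonempty)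
    (horth : ∀ i j : Fin n, i ≠ j →
      3 * (n : ℝ) * |⟪x i, x j⟫| ≤ Finset.univ.inf' hne (fun k => ‖x k‖ ^ 2))
    (Rmin Rmax R : ℝ)
    (hRmin : Rmin = Finset.univ.inf' hne (fun k => ‖x k‖))
    (hRmax : Rmax = Finset.univ.sup' hne (fun k => ‖x k‖))
    (hR : R = Rmax / Rmin)
    (a : Fin m → ℝ)
    (ha : ∀ j, a j = 1 / Real.sqrt m ∨ a j = -(1 / Real.sqrt m))
    (W : Fin m → EuclideanSpace ℝ (Fin d))
    (f : EuclideanSpace ℝ (Fin d) → ℝ)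
    (grad : Fin m → EuclideanSpace ℝ (Fin d))
    (hgrad : ∀ j, grad j =
      ((n : ℝ)⁻¹) • ∑ i, (deriv ℓ (y i * f (x i)) * y i * (a j * φ' ⟪W j, x i⟫)) • x i)
    (G : ℝ)
    (hG : G = (n : ℝ)⁻¹ * ∑ i, -(deriv ℓ (y i * f (x i)))) :
    Real.sqrt (∑ j, ‖grad j‖ ^ 2)
      ≥ (Real.sqrt 2 * γ * Rmin) / (3 * R * Real.sqrt n) * G := by
  obtain ⟨k₀, -, hk₀⟩ := exists_mem_eq_inf' hne fun k => ‖x k‖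
  have hxmin : ∀ k, Rmin ≤ ‖x k‖ := fun k => hRmin ▸ inf'_le _ (mem_univ k)
  have hxmax : ∀ k, ‖x k‖ ≤ Rmax := fun k => hRmax ▸ le_sup' (fun k => ‖x k‖) (mem_univ k)
  have hRmin0 : 0 ≤ Rmin := hRmin ▸ hk₀ ▸ norm_nonneg _
  have hy' : ∀ i, |y i| = 1 := fun i => (abs_eq zero_le_one).2 (hy i)
  have horth' : ∀ i j, i ≠ j → 3 * (Fintype.card (Fin n) : ℝ) * |⟪x i, x j⟫| ≤ Rmin ^ 2 :=
    fun i j hij => by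
      rw [Fintype.card_fin, hRmin, hk₀]
      exact (horth i j hij).trans (inf'_le (fun k => ‖x k‖ ^ 2) (mem_univ k₀))
  rcases hRmin0.eq_or_lt with hzero | hpos
  · simp [← hzero]
  have hμ := norm_sum_smul_pos hy' horth' hpos hxmin k₀
  have hmargin := margin_mul_norm_sum_smul_le hy' horth' hRmin0 hxmin hxmax
  rw [Fintype.card_fin, ← hR] at hmargin
  have hR0 : 0 ≤ R := hR ▸ div_nonneg (hRmin0.trans ((hxmin k₀).trans (hxmax k₀))) hRmin0
  have ha2 := sum_sq_eq_one_of_eq_inv_sqrt hm ha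
  have hlower := mul_mul_le_neg_inner_sum_smul hgrad (by positivity)
    (fun i => (hℓ' (y i * f (x i))).le) ha2 hγ0.le
    (fun j i => hφ'lb ⟪W j, x i⟫) (mul_nonneg (div_nonneg (by positivity) (by positivity)) hμ.le)
    hmargin
  rw [ge_iff_le, hG, ← mul_le_mul_iff_of_pos_right hμ]
  calc _ = γ * (√2 * Rmin / (3 * R * √n) * ‖∑ i, y i • x i‖)
        * ((n : ℝ)⁻¹ * ∑ i, -deriv ℓ (y i * f (x i))) := by ring
    _ ≤ _ := hlower
    _ ≤ _ := neg_inner_sum_smul_le_sqrt_mul_norm ha2 _ _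

/-- Proxy-PL inequality: the Frobenius norm of the gradient of the empirical loss
is lower bounded by a multiple of the empirical sigmoid-type loss `Ĝ`. -/
theorem proxy_PL_inequality {d m n : ℕ} (hm : 0 < m) (hn : 0 < n)
    (γ : ℝ) (hγ0 : 0 < γ) (hγ1 : γ ≤ 1)
    (φ φ' : ℝ → ℝ) (hφ : ∀ z, HasDerivAt φ (φ' z) z)
    (hφ'lb : ∀ z, γ ≤ φ' z) (hφ'ub : ∀ z, φ' z ≤ 1)
    (ℓ : ℝ → ℝ) (hℓ : Differentiable ℝ ℓ) (hℓ' : ∀ z, deriv ℓ z < 0)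
    (x : Fin n → EuclideanSpace ℝ (Fin d)) (y : Fin n → ℝ)
    (hy : ∀ i, y i = 1 ∨ y i = -1)
    (hne : (Finset.univ : Finset (Fin n)).Nonempty)
    (horth : ∀ i j : Fin n, i ≠ j →
      3 * (n : ℝ) * |⟪x i, x j⟫| ≤ Finset.univ.inf' hne (fun k => ‖x k‖ ^ 2))
    (Rmin Rmax R : ℝ)
    (hRmin : Rmin = Finset.univ.inf' hne (fun k => ‖x k‖))
    (hRmax : Rmax = Finset.univ.sup' hne (fun k => ‖x k‖))
    (hR : R = Rmax / Rmin)
    (a : Fin m → ℝ)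
    (ha : ∀ j, a j = 1 / Real.sqrt m ∨ a j = -(1 / Real.sqrt m))
    (W : Fin m → EuclideanSpace ℝ (Fin d))
    (f : EuclideanSpace ℝ (Fin d) → ℝ)
    (hf : ∀ ξ, f ξ = ∑ j, a j * φ ⟪W j, ξ⟫)
    (grad : Fin m → EuclideanSpace ℝ (Fin d))
    (hgrad : ∀ j, grad j =
      ((n : ℝ)⁻¹) • ∑ i, (deriv ℓ (y i * f (x i)) * y i * (a j * φ' ⟪W j, x i⟫)) • x i)
    (G : ℝ)
    (hG : G = (n : ℝ)⁻¹ * ∑ i, -(deriv ℓ (y i * f (x i)))) :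
    Real.sqrt (∑ j, ‖grad j‖ ^ 2)
      ≥ (Real.sqrt 2 * γ * Rmin) / (3 * R * Real.sqrt n) * G :=
  proxy_PL_inequality_general hm γ hγ0 φ' hφ'lb ℓ hℓ' x y hy hne horth Rmin Rmax R hRmin hRmax hR a
    ha W f grad hgrad G hG
end

section
/- Let γ ∈ (0,1) and set ε > 0 with 3 ≤ 1/(24ε). Consider x_1 = (−1,0,0), x_2 = (ε, √(1−ε²), 0), x_3 = (0,0,1) in ℝ³ and the vector z = (6/(4ε+5))·x_2 + (6/5)·x_3 − (6/(4ε+5))·x_1. Then ⟨z, x_2⟩ = 6(ε+1)/(4ε+5) and ⟨z, x_3⟩ = 6/5, and in particular ⟨z, x_2⟩ ≠ ⟨z, x_3⟩ for every ε > 0. -/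
open Real Finset

/-- Computational core of the counterexample: the KKT predictor `z` attains
unequal margins on `x₂` and `x₃`. -/
theorem kkt_predictor_unequal_margins
    (γ : ℝ) (hγ0 : 0 < γ) (hγ1 : γ < 1)
    (ε : ℝ) (hε : 0 < ε) (hεsmall : (3 : ℝ) ≤ 1 / (24 * ε))
    (x₁ x₂ x₃ z : Fin 3 → ℝ)
    (hx₁ : x₁ = ![-1, 0, 0])
    (hx₂ : x₂ = ![ε, Real.sqrt (1 - ε ^ 2), 0])
    (hx₃ : x₃ = ![0, 0, 1])
    (hz : z = fun i => (6 / (4 * ε + 5)) * x₂ i + (6 / 5) * x₃ i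
                      - (6 / (4 * ε + 5)) * x₁ i) :
    (∑ i, z i * x₂ i) = 6 * (ε + 1) / (4 * ε + 5) ∧
    (∑ i, z i * x₃ i) = 6 / 5 ∧
    (∑ i, z i * x₂ i) ≠ (∑ i, z i * x₃ i) := by
  have hεle : ε ≤ 1 / 72 := by
    rw [le_div_iff₀ (by positivity)] at hεsmall
    linarith
  have hsq : Real.sqrt (1 - ε ^ 2) ^ 2 = 1 - ε ^ 2 := by
    rw [Real.sq_sqrt]; nlinarith
  have hd : 4 * ε + 5 ≠ 0 := by positivity
  subst hz hx₁ hx₂ hx₃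
  have h2 : (∑ i, (fun i => (6 / (4 * ε + 5)) * ![ε, Real.sqrt (1 - ε ^ 2), 0] i
      + (6 / 5) * ![(0:ℝ), 0, 1] i - (6 / (4 * ε + 5)) * ![(-1:ℝ), 0, 0] i) i
      * ![ε, Real.sqrt (1 - ε ^ 2), 0] i) = 6 * (ε + 1) / (4 * ε + 5) := by
    simp [Fin.sum_univ_three]
    field_simp
    nlinarith [hsq]
  have h3 : (∑ i, (fun i => (6 / (4 * ε + 5)) * ![ε, Real.sqrt (1 - ε ^ 2), 0] i
      + (6 / 5) * ![(0:ℝ), 0, 1] i - (6 / (4 * ε + 5)) * ![(-1:ℝ), 0, 0] i) i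
      * ![(0:ℝ), 0, 1] i) = 6 / 5 := by
    simp [Fin.sum_univ_three]
  refine ⟨h2, h3, ?_⟩
  rw [h2, h3]
  intro h
  rw [div_eq_div_iff hd (by norm_num)] at h
  nlinarith
end
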